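/- Let (fₙ) be a sequence of Henstock–Kurzweil integrable functions on [a,b] with fₙ → f pointwise almost everywhere, fₙ ≤ f_{n+1} almost everywhere for every n, and supₙ ∫fₙ < ∞ (HK integrals). Then f is HK integrable on [a,b] and ∫f = limₙ ∫fₙ. -/

import Mathlib

/-!
Changing the `fₙ` on a null set changes no HK integral, so we may assume that `fₙ y` increases to
`g y` at every `y`; then the `αₙ` increase to some `A`. Given `ε`, choose `n₀` with `α n₀ > A - ε`,
for every `y` an index `N y ≥ n₀` with `f (N y) y` within `ε` of `g y`, and take the gauge
`y ↦ δ_{N y} y`, where `δₘ` is a gauge of `fₘ` with tolerance `ε 2⁻ᵐ`. On a fine partition the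
Riemann sum of `g` is close to that of `y ↦ f (N y) y`, which by the Saks–Henstock lemma is close
to the sum over the pieces of the integrals of `f (N xⱼ)`; by monotonicity that sum lies between
`α n₀` and `A`.
-/

def IsTaggedPartition (a b : ℝ) (n : ℕ) (t x : ℕ → ℝ) : Prop :=
  t 0 = a ∧ t n = b ∧ (∀ j < n, t j < t (j + 1)) ∧
    ∀ j < n, x j ∈ Set.Icc (t j) (t (j + 1))

def IsFine (δ : ℝ → ℝ) (n : ℕ) (t x : ℕ → ℝ) : Prop :=
  ∀ j < n, t (j + 1) - t j < δ (x j)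

def RiemannSum (g : ℝ → ℝ) (n : ℕ) (t x : ℕ → ℝ) : ℝ :=
  ∑ j ∈ Finset.range n, g (x j) * (t (j + 1) - t j)

/-- `f` is Henstock–Kurzweil integrable on `[a,b]` with integral `α`. -/
def HKIntegral (a b : ℝ) (f : ℝ → ℝ) (α : ℝ) : Prop :=
  ∀ ε > 0, ∃ δ : ℝ → ℝ, (∀ y ∈ Set.Icc a b, 0 < δ y) ∧
    ∀ (n : ℕ) (t x : ℕ → ℝ), IsTaggedPartition a b n t x → IsFine δ n t x →
      |RiemannSum f n t x - α| < ε

open Finset Filter Topology MeasureTheory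

namespace IsTaggedPartition

variable {a b c : ℝ} {n : ℕ} {t x : ℕ → ℝ}

theorem strictMonoOn (hp : IsTaggedPartition a b n t x) : StrictMonoOn t (Set.Iic n) :=
  strictMonoOn_Iic_of_lt_succ fun j hj => by simpa using hp.2.2.1 j hj

theorem mem_Icc (hp : IsTaggedPartition a b n t x) {j : ℕ} (hj : j ≤ n) : t j ∈ Set.Icc a b := by
  rw [← hp.1, ← hp.2.1]
  exact ⟨hp.strictMonoOn.monotoneOn (Nat.zero_le n) hj (Nat.zero_le j),
    hp.strictMonoOn.monotoneOn hj (le_refl n) hj⟩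

theorem le (hp : IsTaggedPartition a b n t x) : a ≤ b :=
  (hp.mem_Icc (Nat.zero_le n)).2.trans' (hp.mem_Icc (Nat.zero_le n)).1

theorem eq_zero_of_eq (hp : IsTaggedPartition a a n t x) : n = 0 := by
  by_contra hn
  have := hp.strictMonoOn (Nat.zero_le n) (le_refl n) (Nat.pos_of_ne_zero hn)
  rw [hp.1, hp.2.1] at this
  exact this.false

theorem Icc_subset (hp : IsTaggedPartition a b n t x) {j : ℕ} (hj : j < n) :
    Set.Icc (t j) (t (j + 1)) ⊆ Set.Icc a b :=
  Set.Icc_subset_Icc (hp.mem_Icc hj.le).1 (hp.mem_Icc hj).2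

theorem tag_mem (hp : IsTaggedPartition a b n t x) {j : ℕ} (hj : j < n) : x j ∈ Set.Icc a b :=
  hp.Icc_subset hj (hp.2.2.2 j hj)

theorem length_nonneg (hp : IsTaggedPartition a b n t x) {j : ℕ} (hj : j < n) :
    0 ≤ t (j + 1) - t j :=
  sub_nonneg.2 (hp.2.2.1 j hj).le

theorem sum_lengths (hp : IsTaggedPartition a b n t x) :
    ∑ j ∈ range n, (t (j + 1) - t j) = b - a := by
  rw [sum_range_sub, hp.1, hp.2.1]

theorem nil (c : ℝ) (x : ℕ → ℝ) : IsTaggedPartition c c 0 (fun _ => c) x :=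
  ⟨rfl, rfl, fun _ h => absurd h (Nat.not_lt_zero _), fun _ h => absurd h (Nat.not_lt_zero _)⟩

theorem exists_single (hab : a < b) {y : ℝ} (hy : y ∈ Set.Icc a b) :
    ∃ t x : ℕ → ℝ, IsTaggedPartition a b 1 t x ∧
      (∀ δ : ℝ → ℝ, b - a < δ y → IsFine δ 1 t x) ∧
      ∀ g : ℝ → ℝ, RiemannSum g 1 t x = g y * (b - a) := by
  refine ⟨fun j => if j = 0 then a else b, fun _ => y, ⟨rfl, rfl, ?_, ?_⟩, ?_, ?_⟩
  · intro j hj; interval_cases j; simpa using hab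
  · intro j hj; interval_cases j; simpa using hy
  · intro δ hδ j hj; interval_cases j; simpa using hδ
  · intro g; simp [RiemannSum]

theorem append {d : ℝ} {n₁ n₂ : ℕ} {t₁ x₁ t₂ x₂ : ℕ → ℝ}
    (h₁ : IsTaggedPartition a c n₁ t₁ x₁) (h₂ : IsTaggedPartition c d n₂ t₂ x₂) :
    ∃ t x : ℕ → ℝ, IsTaggedPartition a d (n₁ + n₂) t x ∧
      (∀ δ : ℝ → ℝ, IsFine δ n₁ t₁ x₁ → IsFine δ n₂ t₂ x₂ → IsFine δ (n₁ + n₂) t x) ∧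
      ∀ g : ℝ → ℝ, RiemannSum g (n₁ + n₂) t x = RiemannSum g n₁ t₁ x₁ + RiemannSum g n₂ t₂ x₂ := by
  set T : ℕ → ℝ := fun j => if j ≤ n₁ then t₁ j else t₂ (j - n₁)
  set X : ℕ → ℝ := fun j => if j < n₁ then x₁ j else x₂ (j - n₁)
  have hT₂ : ∀ i, T (n₁ + i) = t₂ i := by
    intro i
    rcases i.eq_zero_or_pos with rfl | hi
    · simp [T, h₁.2.1, h₂.1]
    · simp [T, hi.ne']
  have hleft : ∀ j < n₁, T j = t₁ j ∧ T (j + 1) = t₁ (j + 1) ∧ X j = x₁ j := fun j hj => by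
    simp [T, X, hj, hj.le, Nat.succ_le_of_lt hj]
  have hright : ∀ i, T (n₁ + i) = t₂ i ∧ T (n₁ + i + 1) = t₂ (i + 1) ∧ X (n₁ + i) = x₂ i :=
    fun i => ⟨hT₂ i, hT₂ (i + 1), by simp [X]⟩
  have hsplit : ∀ P : ℕ → Prop, (∀ j < n₁, P j) → (∀ i < n₂, P (n₁ + i)) → ∀ j < n₁ + n₂, P j := by
    intro P hP₁ hP₂ j hj
    rcases lt_or_ge j n₁ with hj₁ | hj₁
    · exact hP₁ j hj₁
    · simpa [Nat.add_sub_cancel' hj₁] using hP₂ (j - n₁) (by omega)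
  refine ⟨T, X, ⟨by simp [T, h₁.1], by simpa [h₂.2.1] using hT₂ n₂, ?_, ?_⟩, ?_, ?_⟩
  · refine hsplit _ (fun j hj => ?_) fun i hi => ?_
    · rw [(hleft j hj).1, (hleft j hj).2.1]; exact h₁.2.2.1 j hj
    · rw [(hright i).1, (hright i).2.1]; exact h₂.2.2.1 i hi
  · refine hsplit _ (fun j hj => ?_) fun i hi => ?_
    · rw [(hleft j hj).1, (hleft j hj).2.1, (hleft j hj).2.2]; exact h₁.2.2.2 j hj
    · rw [(hright i).1, (hright i).2.1, (hright i).2.2]; exact h₂.2.2.2 i hi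
  · intro δ hf₁ hf₂
    refine hsplit _ (fun j hj => ?_) fun i hi => ?_
    · rw [(hleft j hj).1, (hleft j hj).2.1, (hleft j hj).2.2]; exact hf₁ j hj
    · rw [(hright i).1, (hright i).2.1, (hright i).2.2]; exact hf₂ i hi
  · intro g
    simp only [RiemannSum, sum_range_add]
    congr 1
    · refine sum_congr rfl fun j hj => ?_
      rw [(hleft j (mem_range.1 hj)).1, (hleft j (mem_range.1 hj)).2.1, (hleft j (mem_range.1 hj)).2.2]
    · refine sum_congr rfl fun i _ => ?_
      rw [(hright i).1, (hright i).2.1, (hright i).2.2]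

end IsTaggedPartition

theorem IsFine.mono {δ δ' : ℝ → ℝ} {n : ℕ} {t x : ℕ → ℝ} (h : IsFine δ n t x)
    (hδ : ∀ y, δ y ≤ δ' y) : IsFine δ' n t x :=
  fun j hj => (h j hj).trans_le (hδ _)

theorem IsFine.Icc_subset_ball {a b : ℝ} {δ : ℝ → ℝ} {n : ℕ} {t x : ℕ → ℝ}
    (hp : IsTaggedPartition a b n t x) (hf : IsFine δ n t x) {j : ℕ} (hj : j < n) :
    Set.Icc (t j) (t (j + 1)) ⊆ Metric.ball (x j) (δ (x j)) := by
  intro z hz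
  have hx := hp.2.2.2 j hj
  have hlen := hf j hj
  rw [Metric.mem_ball, Real.dist_eq, abs_lt]
  constructor <;> linarith [hz.1, hz.2, hx.1, hx.2]

/-- Cousin's lemma. -/
theorem exists_isFine {c d : ℝ} (hcd : c ≤ d) {δ : ℝ → ℝ} (hδ : ∀ y ∈ Set.Icc c d, 0 < δ y) :
    ∃ (n : ℕ) (t x : ℕ → ℝ), IsTaggedPartition c d n t x ∧ IsFine δ n t x := by
  set S : Set ℝ := {e | e ≤ d ∧ ∃ (n : ℕ) (t x : ℕ → ℝ), IsTaggedPartition c e n t x ∧ IsFine δ n t x}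
  have hcS : c ∈ S := ⟨hcd, 0, _, fun _ => c, IsTaggedPartition.nil c _, fun _ h => absurd h (by omega)⟩
  have hbdd : BddAbove S := ⟨d, fun e he => he.1⟩
  set s := sSup S
  have hs : s ∈ Set.Icc c d := ⟨le_csSup hbdd hcS, csSup_le ⟨c, hcS⟩ fun e he => he.1⟩
  obtain ⟨e, heS, hse⟩ : ∃ e ∈ S, s - δ s / 2 < e :=
    exists_lt_of_lt_csSup ⟨c, hcS⟩ (by linarith [hδ s hs])
  have hes : e ≤ s := le_csSup hbdd heS
  -- a partition of `[c, e]` extends by the interval `[e, d']` tagged at `s`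
  set d' := min d (s + δ s / 2)
  have hsd' : s ≤ d' := le_min hs.2 (by linarith [hδ s hs])
  have hd'S : d' ∈ S := by
    rcases (hes.trans hsd').eq_or_lt with heq | hlt
    · rwa [← heq]
    obtain ⟨n, t, x, hp, hf⟩ := heS.2
    obtain ⟨t₁, x₁, hp₁, hf₁, -⟩ := IsTaggedPartition.exists_single hlt ⟨hes, hsd'⟩
    obtain ⟨T, X, hP, hF, -⟩ := hp.append hp₁
    refine ⟨min_le_left _ _, n + 1, T, X, hP, hF δ hf (hf₁ δ ?_)⟩
    linarith [min_le_right d (s + δ s / 2)]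
  have hsd : s = d := by
    by_contra hne
    have : s < d' := lt_min (hs.2.lt_of_ne hne) (by linarith [hδ s hs])
    exact (le_csSup hbdd hd'S).not_gt this
  have hd' : d' = d := min_eq_left (by linarith [hδ s hs])
  exact hd' ▸ hd'S.2

theorem exists_isFine₂ {c d : ℝ} (hcd : c ≤ d) {δ₁ δ₂ : ℝ → ℝ}
    (hδ₁ : ∀ y ∈ Set.Icc c d, 0 < δ₁ y) (hδ₂ : ∀ y ∈ Set.Icc c d, 0 < δ₂ y) :
    ∃ (n : ℕ) (t x : ℕ → ℝ), IsTaggedPartition c d n t x ∧ IsFine δ₁ n t x ∧ IsFine δ₂ n t x := by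
  obtain ⟨n, t, x, hp, hf⟩ :=
    exists_isFine hcd (δ := fun y => min (δ₁ y) (δ₂ y)) fun y hy => lt_min (hδ₁ y hy) (hδ₂ y hy)
  exact ⟨n, t, x, hp, hf.mono fun _ => min_le_left _ _, hf.mono fun _ => min_le_right _ _⟩

theorem exists_isFine_of_pieces {δ f : ℝ → ℝ} {η : ℝ} (t R : ℕ → ℝ) (n : ℕ)
    (h : ∀ j < n, ∃ (m : ℕ) (u y : ℕ → ℝ), IsTaggedPartition (t j) (t (j + 1)) m u y ∧
      IsFine δ m u y ∧ |RiemannSum f m u y - R j| ≤ η) :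
    ∃ (m : ℕ) (u y : ℕ → ℝ), IsTaggedPartition (t 0) (t n) m u y ∧ IsFine δ m u y ∧
      |RiemannSum f m u y - ∑ j ∈ range n, R j| ≤ n * η := by
  induction n with
  | zero => exact ⟨0, _, fun _ => t 0, IsTaggedPartition.nil _ _,
      fun _ h => absurd h (by omega), by simp [RiemannSum]⟩
  | succ n ih =>
    obtain ⟨m, u, y, hp, hf, hR⟩ := ih fun j hj => h j (by omega)
    obtain ⟨m', u', y', hp', hf', hR'⟩ := h n (by omega)
    obtain ⟨T, X, hP, hF, hS⟩ := hp.append hp'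
    refine ⟨m + m', T, X, hP, hF δ hf hf', ?_⟩
    rw [hS, sum_range_succ, Nat.cast_succ]
    calc _ = |(RiemannSum f m u y - ∑ j ∈ range n, R j) + (RiemannSum f m' u' y' - R n)| := by
          ring_nf
      _ ≤ n * η + η := (abs_add_le _ _).trans (add_le_add hR hR')
      _ = (n + 1) * η := by ring

theorem riemannSum_add (f g : ℝ → ℝ) (n : ℕ) (t x : ℕ → ℝ) :
    RiemannSum (f + g) n t x = RiemannSum f n t x + RiemannSum g n t x := by
  simp only [RiemannSum, Pi.add_apply, add_mul, sum_add_distrib]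

theorem IsTaggedPartition.riemannSum_le {a b : ℝ} {n : ℕ} {t x : ℕ → ℝ}
    (hp : IsTaggedPartition a b n t x) {f g : ℝ → ℝ} (hfg : ∀ y ∈ Set.Icc a b, f y ≤ g y) :
    RiemannSum f n t x ≤ RiemannSum g n t x :=
  sum_le_sum fun _ hj => mul_le_mul_of_nonneg_right (hfg _ (hp.tag_mem (mem_range.1 hj)))
    (hp.length_nonneg (mem_range.1 hj))

theorem IsTaggedPartition.abs_riemannSum_le {a b : ℝ} {n : ℕ} {t x : ℕ → ℝ}
    (hp : IsTaggedPartition a b n t x) {f : ℝ → ℝ} {C : ℝ} (hf : ∀ y ∈ Set.Icc a b, |f y| ≤ C) :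
    |RiemannSum f n t x| ≤ C * (b - a) := by
  rw [← hp.sum_lengths, mul_sum]
  refine (abs_sum_le_sum_abs _ _).trans (sum_le_sum fun j hj => ?_)
  have hj := mem_range.1 hj
  rw [abs_mul, abs_of_nonneg (hp.length_nonneg hj)]
  exact mul_le_mul_of_nonneg_right (hf _ (hp.tag_mem hj)) (hp.length_nonneg hj)

theorem hkIntegral_self (c : ℝ) (f : ℝ → ℝ) : HKIntegral c c f 0 := fun ε hε =>
  ⟨fun _ => 1, fun _ _ => one_pos, fun n t x hp _ => by
    obtain rfl := hp.eq_zero_of_eq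
    simpa [RiemannSum] using hε⟩

namespace HKIntegral

variable {a b : ℝ} {f g : ℝ → ℝ} {α β : ℝ}

theorem mono (hab : a ≤ b) (hf : HKIntegral a b f α) (hg : HKIntegral a b g β)
    (hfg : ∀ y ∈ Set.Icc a b, f y ≤ g y) : α ≤ β := by
  refine le_of_forall_pos_le_add fun ε hε => ?_
  obtain ⟨δ₁, hδ₁, H₁⟩ := hf (ε / 2) (half_pos hε)
  obtain ⟨δ₂, hδ₂, H₂⟩ := hg (ε / 2) (half_pos hε)
  obtain ⟨n, t, x, hp, hf₁, hf₂⟩ := exists_isFine₂ hab hδ₁ hδ₂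
  have h₁ := (abs_lt.1 (H₁ n t x hp hf₁)).1
  have h₂ := (abs_lt.1 (H₂ n t x hp hf₂)).2
  linarith [hp.riemannSum_le hfg]

theorem unique (hab : a ≤ b) (hα : HKIntegral a b f α) (hβ : HKIntegral a b f β) : α = β :=
  (hα.mono hab hβ fun _ _ => le_rfl).antisymm (hβ.mono hab hα fun _ _ => le_rfl)

theorem add (hf : HKIntegral a b f α) (hg : HKIntegral a b g β) :
    HKIntegral a b (f + g) (α + β) := by
  intro ε hε
  obtain ⟨δ₁, hδ₁, H₁⟩ := hf (ε / 2) (half_pos hε)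
  obtain ⟨δ₂, hδ₂, H₂⟩ := hg (ε / 2) (half_pos hε)
  refine ⟨fun y => min (δ₁ y) (δ₂ y), fun y hy => lt_min (hδ₁ y hy) (hδ₂ y hy),
    fun n t x hp hfine => ?_⟩
  have h₁ := H₁ n t x hp (hfine.mono fun _ => min_le_left _ _)
  have h₂ := H₂ n t x hp (hfine.mono fun _ => min_le_right _ _)
  rw [riemannSum_add]
  calc _ = |(RiemannSum f n t x - α) + (RiemannSum g n t x - β)| := by ring_nf
    _ < ε / 2 + ε / 2 := (abs_add_le _ _).trans_lt (add_lt_add h₁ h₂)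
    _ = ε := add_halves ε

theorem eq_add_of_adjacent {c : ℝ} {γ₁ γ₂ : ℝ} (hac : a ≤ c) (hcb : c ≤ b)
    (h₁ : HKIntegral a c f γ₁) (h₂ : HKIntegral c b f γ₂) (h : HKIntegral a b f α) :
    α = γ₁ + γ₂ := by
  refine eq_of_forall_dist_le fun ε hε => ?_
  obtain ⟨δ, hδ, H⟩ := h (ε / 3) (by positivity)
  obtain ⟨δ₁, hδ₁, H₁⟩ := h₁ (ε / 3) (by positivity)
  obtain ⟨δ₂, hδ₂, H₂⟩ := h₂ (ε / 3) (by positivity)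
  obtain ⟨n₁, t₁, x₁, hp₁, hf₁, hf₁'⟩ :=
    exists_isFine₂ hac (fun y hy => hδ y ⟨hy.1, hy.2.trans hcb⟩) hδ₁
  obtain ⟨n₂, t₂, x₂, hp₂, hf₂, hf₂'⟩ :=
    exists_isFine₂ hcb (fun y hy => hδ y ⟨hac.trans hy.1, hy.2⟩) hδ₂
  obtain ⟨T, X, hP, hF, hS⟩ := hp₁.append hp₂
  have e := H _ T X hP (hF δ hf₁ hf₂)
  have e₁ := H₁ n₁ t₁ x₁ hp₁ hf₁'
  have e₂ := H₂ n₂ t₂ x₂ hp₂ hf₂'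
  rw [hS] at e
  rw [Real.dist_eq]
  rw [abs_lt] at e e₁ e₂
  rw [abs_le]
  constructor <;> linarith

end HKIntegral

theorem hkIntegral_of_cauchy {c d : ℝ} {f : ℝ → ℝ} (hcd : c ≤ d)
    (h : ∀ ε > 0, ∃ δ : ℝ → ℝ, (∀ y ∈ Set.Icc c d, 0 < δ y) ∧
      ∀ (n : ℕ) (t x : ℕ → ℝ) (n' : ℕ) (t' x' : ℕ → ℝ),
        IsTaggedPartition c d n t x → IsFine δ n t x →
        IsTaggedPartition c d n' t' x' → IsFine δ n' t' x' →
        |RiemannSum f n t x - RiemannSum f n' t' x'| < ε) :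
    ∃ γ, HKIntegral c d f γ := by
  choose D hDpos hD using fun k : ℕ => h (1 / (k + 1)) Nat.one_div_pos_of_nat
  -- nested gauges, so that a partition fine for `δ l` is fine for every `D k` with `k ≤ l`
  set δ : ℕ → ℝ → ℝ := fun k y => (range (k + 1)).inf' nonempty_range_add_one fun i => D i y
  have hδpos : ∀ k, ∀ y ∈ Set.Icc c d, 0 < δ k y :=
    fun k y hy => (lt_inf'_iff _).2 fun i _ => hDpos i y hy
  have hδD : ∀ {k l : ℕ}, k ≤ l → ∀ y, δ l y ≤ D k y :=
    fun hkl y => inf'_le _ (mem_range.2 (by omega))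
  choose N T X hP hF using fun k => exists_isFine hcd (hδpos k)
  have hclose : ∀ (k : ℕ) (n : ℕ) (t x : ℕ → ℝ) (l : ℕ), k ≤ l →
      IsTaggedPartition c d n t x → IsFine (δ k) n t x →
      |RiemannSum f n t x - RiemannSum f (N l) (T l) (X l)| < 1 / (k + 1) :=
    fun k n t x l hkl hp hf =>
      hD k _ _ _ _ _ _ hp (hf.mono (hδD le_rfl)) (hP l) ((hF l).mono (hδD hkl))
  obtain ⟨γ, hγ⟩ := cauchySeq_tendsto_of_complete <|
    cauchySeq_of_le_tendsto_0' (s := fun k => RiemannSum f (N k) (T k) (X k))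
      (fun k : ℕ => 1 / (k + 1 : ℝ)) (fun k l hkl => (hclose k _ _ _ l hkl (hP k) (hF k)).le)
      tendsto_one_div_add_atTop_nhds_zero_nat
  refine ⟨γ, fun ε hε => ?_⟩
  obtain ⟨K, hK⟩ := exists_nat_one_div_lt hε
  refine ⟨δ K, hδpos K, fun n t x hp hf => ?_⟩
  have : |RiemannSum f n t x - γ| ≤ 1 / (K + 1) :=
    le_of_tendsto (tendsto_const_nhds.sub hγ).abs
      ((eventually_ge_atTop K).mono fun l hl => (hclose K n t x l hl hp hf).le)
  linarith

namespace HKIntegral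

variable {a b : ℝ} {f : ℝ → ℝ} {α : ℝ}

theorem exists_of_subset {c d : ℝ} (hac : a ≤ c) (hcd : c ≤ d) (hdb : d ≤ b)
    (h : HKIntegral a b f α) : ∃ γ, HKIntegral c d f γ := by
  refine hkIntegral_of_cauchy hcd fun ε hε => ?_
  obtain ⟨δ, hδ, H⟩ := h (ε / 2) (half_pos hε)
  obtain ⟨m₁, u₁, y₁, hq₁, hg₁⟩ :=
    exists_isFine hac fun y hy => hδ y ⟨hy.1, hy.2.trans (hcd.trans hdb)⟩
  obtain ⟨m₂, u₂, y₂, hq₂, hg₂⟩ :=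
    exists_isFine hdb fun y hy => hδ y ⟨(hac.trans hcd).trans hy.1, hy.2⟩
  -- fixed fine partitions of `[a, c]` and `[d, b]` extend every fine partition of `[c, d]`
  have hext : ∀ (n : ℕ) (t x : ℕ → ℝ), IsTaggedPartition c d n t x → IsFine δ n t x →
      |RiemannSum f m₁ u₁ y₁ + RiemannSum f n t x + RiemannSum f m₂ u₂ y₂ - α| < ε / 2 := by
    intro n t x hp hf
    obtain ⟨T₁, X₁, hP₁, hF₁, hS₁⟩ := hq₁.append hp
    obtain ⟨T₂, X₂, hP₂, hF₂, hS₂⟩ := hP₁.append hq₂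
    simpa [hS₁, hS₂] using H _ _ _ hP₂ (hF₂ δ (hF₁ δ hg₁ hf) hg₂)
  refine ⟨δ, fun y hy => hδ y ⟨hac.trans hy.1, hy.2.trans hdb⟩,
    fun n t x n' t' x' hp hf hp' hf' => ?_⟩
  have e := hext n t x hp hf
  have e' := hext n' t' x' hp' hf'
  rw [abs_lt] at e e' ⊢
  constructor <;> linarith

theorem exists_sum_eq (h : HKIntegral a b f α) {n : ℕ} {t x : ℕ → ℝ}
    (hp : IsTaggedPartition a b n t x) :
    ∃ I : ℕ → ℝ, (∀ j < n, HKIntegral (t j) (t (j + 1)) f (I j)) ∧ ∑ j ∈ range n, I j = α := by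
  choose I hI using fun j => (em (j < n)).elim
    (fun hj => (h.exists_of_subset (hp.mem_Icc hj.le).1 (hp.2.2.1 j hj).le (hp.mem_Icc hj).2).imp
      fun _ hγ _ => hγ)
    fun hj => ⟨0, fun hj' => absurd hj' hj⟩
  have hprefix : ∀ k ≤ n, HKIntegral a (t k) f (∑ j ∈ range k, I j) := by
    intro k
    induction k with
    | zero => intro _; simpa [hp.1] using hkIntegral_self a f
    | succ k ih =>
      intro (hk : k < n)
      obtain ⟨γ, hγ⟩ := h.exists_of_subset le_rfl (hp.mem_Icc hk).1 (hp.mem_Icc hk).2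
      rw [sum_range_succ, ← (ih hk.le).eq_add_of_adjacent (hp.mem_Icc hk.le).1
        (hp.2.2.1 k hk).le (hI k hk) hγ]
      exact hγ
  exact ⟨I, hI, (hp.2.1 ▸ hprefix n le_rfl).unique hp.le h⟩

end HKIntegral

/-- The Saks–Henstock lemma. -/
theorem abs_sum_sub_integral_le {a b : ℝ} {f : ℝ → ℝ} {α : ℝ} {δ : ℝ → ℝ} {ε : ℝ} (hδ : ∀ y ∈ Set.Icc a b, 0 < δ y)
    (Hδ : ∀ (n : ℕ) (t x : ℕ → ℝ), IsTaggedPartition a b n t x → IsFine δ n t x →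
      |RiemannSum f n t x - α| < ε)
    {n : ℕ} {t x : ℕ → ℝ} (hp : IsTaggedPartition a b n t x) {I : ℕ → ℝ}
    (hI : ∀ j < n, HKIntegral (t j) (t (j + 1)) f (I j)) (hsum : ∑ j ∈ range n, I j = α)
    {S : Finset ℕ} (hS : S ⊆ range n) (hfine : ∀ j ∈ S, t (j + 1) - t j < δ (x j)) :
    |∑ j ∈ S, (f (x j) * (t (j + 1) - t j) - I j)| ≤ ε := by
  refine le_of_forall_pos_le_add fun η hη => ?_
  -- keep the intervals indexed by `S`, and replace every other one by a fine partition of it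
  -- whose Riemann sum is within `η / (n + 1)` of its integral
  set R : ℕ → ℝ := fun j => if j ∈ S then f (x j) * (t (j + 1) - t j) else I j
  have hpieces : ∀ j < n, ∃ (m : ℕ) (u y : ℕ → ℝ), IsTaggedPartition (t j) (t (j + 1)) m u y ∧
      IsFine δ m u y ∧ |RiemannSum f m u y - R j| ≤ η / (n + 1) := by
    intro j hj
    by_cases hjS : j ∈ S
    · obtain ⟨u, y, hq, hqf, hqs⟩ := IsTaggedPartition.exists_single (hp.2.2.1 j hj) (hp.2.2.2 j hj)
      exact ⟨1, u, y, hq, hqf δ (hfine j hjS), by simp [R, hjS, hqs]; positivity⟩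
    · obtain ⟨δⱼ, hδⱼ, Hⱼ⟩ := hI j hj (η / (n + 1)) (by positivity)
      obtain ⟨m, u, y, hq, hqf, hqfⱼ⟩ :=
        exists_isFine₂ (hp.2.2.1 j hj).le (fun z hz => hδ z (hp.Icc_subset hj hz)) hδⱼ
      exact ⟨m, u, y, hq, hqf, by simpa [R, hjS] using (Hⱼ m u y hq hqfⱼ).le⟩
  obtain ⟨m, u, y, hq, hqf, hR⟩ := exists_isFine_of_pieces t R n hpieces
  rw [hp.1, hp.2.1] at hq
  have hRα : ∑ j ∈ range n, R j - α = ∑ j ∈ S, (f (x j) * (t (j + 1) - t j) - I j) := by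
    rw [← hsum, ← sum_sub_distrib, ← inter_eq_right.2 hS, ← sum_ite_mem]
    exact sum_congr rfl fun j _ => by by_cases hjS : j ∈ S <;> simp [R, hjS]
  have hnη : n * (η / (n + 1)) ≤ η := by
    rw [mul_div_assoc']
    exact div_le_of_le_mul₀ (by positivity) hη.le (by nlinarith)
  rw [← hRα]
  calc _ = |(RiemannSum f m u y - α) - (RiemannSum f m u y - ∑ j ∈ range n, R j)| := by ring_nf
    _ ≤ ε + η := (abs_sub _ _).trans (add_le_add (Hδ m u y hq hqf).le (hR.trans hnη))

theorem abs_sum_le_of_abs_sum_fiber_le {ι : Type*} (s : Finset ι) (key : ι → ℕ) (v : ι → ℝ)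
    {C : ℝ} (h : ∀ k, |∑ i ∈ s with key i = k, v i| ≤ C * (1 / 2) ^ k) :
    |∑ i ∈ s, v i| ≤ 2 * C := by
  have hC : 0 ≤ C := by simpa using (abs_nonneg _).trans (h 0)
  rw [← sum_fiberwise_of_maps_to fun i hi => mem_image_of_mem key hi]
  calc _ ≤ ∑ k ∈ s.image key, |∑ i ∈ s with key i = k, v i| := abs_sum_le_sum_abs _ _
    _ ≤ ∑ k ∈ s.image key, C * (1 / 2) ^ k := sum_le_sum fun k _ => h k
    _ ≤ ∑' k, C * (1 / 2) ^ k :=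
      (summable_geometric_two.mul_left C).sum_le_tsum _ fun _ _ => by positivity
    _ = 2 * C := by rw [tsum_mul_left, tsum_geometric_two, mul_comm]

theorem IsTaggedPartition.sum_lengths_le_volume {a b : ℝ} {n : ℕ} {t x : ℕ → ℝ}
    (hp : IsTaggedPartition a b n t x) {s : Finset ℕ} (hs : s ⊆ range n) {U : Set ℝ}
    (hU : ∀ j ∈ s, Set.Ioc (t j) (t (j + 1)) ⊆ U) :
    ENNReal.ofReal (∑ j ∈ s, (t (j + 1) - t j)) ≤ volume U := by
  have hlen : ∀ j ∈ s, 0 ≤ t (j + 1) - t j := fun j hj => hp.length_nonneg (mem_range.1 (hs hj))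
  have hdisj : (s : Set ℕ).PairwiseDisjoint fun j => Set.Ioc (t j) (t (j + 1)) := by
    intro i hi j hj hij
    have hmono := hp.strictMonoOn.monotoneOn
    have hi' := mem_range.1 (hs hi)
    have hj' := mem_range.1 (hs hj)
    simp only [Function.onFun, Set.Ioc_disjoint_Ioc]
    rcases hij.lt_or_gt with hlt | hlt
    · exact (min_le_left _ _).trans ((hmono (Nat.succ_le_of_lt hi') hj'.le hlt).trans
        (le_max_right _ _))
    · exact (min_le_right _ _).trans ((hmono (Nat.succ_le_of_lt hj') hi'.le hlt).trans
        (le_max_left _ _))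
  calc ENNReal.ofReal (∑ j ∈ s, (t (j + 1) - t j))
      = volume (⋃ j ∈ s, Set.Ioc (t j) (t (j + 1))) := by
        rw [measure_biUnion_finset hdisj fun _ _ => measurableSet_Ioc,
          ENNReal.ofReal_sum_of_nonneg hlen]
        simp only [Real.volume_Ioc]
    _ ≤ volume U := measure_mono (Set.iUnion₂_subset hU)

/-- Cover the null set `{φ ≠ 0}` by open sets `U k` of measure `< ε 2⁻ᵏ / (4 (k + 1))`; a gauge
keeping the intervals tagged at points where `⌊|φ|⌋ = k` inside `U k` makes every Riemann sum
smaller than `ε`. -/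
theorem hkIntegral_zero_of_ae_eq_zero {a b : ℝ} {φ : ℝ → ℝ}
    (hφ : φ =ᵐ[volume.restrict (Set.Icc a b)] 0) : HKIntegral a b φ 0 := by
  set E : Set ℝ := {y | φ y ≠ 0} ∩ Set.Icc a b
  have hE : volume E = 0 := by
    rwa [EventuallyEq, ae_iff, Measure.restrict_apply' measurableSet_Icc] at hφ
  intro ε hε
  set η : ℕ → ℝ := fun k => ε / 4 * (1 / 2) ^ k / (k + 1)
  choose U hEU hUo hUη using fun k => Set.exists_isOpen_lt_of_lt E (ENNReal.ofReal (η k))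
    (by rw [hE]; exact ENNReal.ofReal_pos.2 (by positivity))
  set key : ℝ → ℕ := fun y => ⌊|φ y|⌋₊
  have hr : ∀ y, ∃ r > 0, y ∈ E → Metric.ball y r ⊆ U (key y) := fun y => by
    by_cases hy : y ∈ E
    · obtain ⟨r, hr, hrU⟩ := Metric.isOpen_iff.1 (hUo (key y)) y (hEU (key y) hy)
      exact ⟨r, hr, fun _ => hrU⟩
    · exact ⟨1, one_pos, fun hy' => absurd hy' hy⟩
  choose r hr0 hrU using hr
  refine ⟨r, fun y _ => hr0 y, fun n t x hp hf => ?_⟩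
  rw [sub_zero]
  refine (abs_sum_le_of_abs_sum_fiber_le (range n) (fun j => key (x j)) _ (C := ε / 4)
    fun k => ?_).trans_lt (by linarith)
  set F := {j ∈ range n | key (x j) = k}
  have hlen : ∑ j ∈ F with x j ∈ E, (t (j + 1) - t j) ≤ η k := by
    refine ((ENNReal.ofReal_le_ofReal_iff (by positivity)).1 ((hp.sum_lengths_le_volume
      ((filter_subset _ _).trans (filter_subset _ _)) fun j hj => ?_).trans (hUη k).le))
    simp only [mem_filter, mem_range] at hj
    exact Set.Ioc_subset_Icc_self.trans <| (hf.Icc_subset_ball hp hj.1.1).trans <|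
      hj.1.2 ▸ hrU _ hj.2
  calc |∑ j ∈ F, φ (x j) * (t (j + 1) - t j)|
      ≤ ∑ j ∈ F, if x j ∈ E then (k + 1) * (t (j + 1) - t j) else 0 := by
        refine (abs_sum_le_sum_abs _ _).trans (sum_le_sum fun j hj => ?_)
        simp only [F, mem_filter, mem_range] at hj
        rw [abs_mul, abs_of_nonneg (hp.length_nonneg hj.1)]
        split_ifs with hjE
        · refine mul_le_mul_of_nonneg_right ?_ (hp.length_nonneg hj.1)
          exact hj.2 ▸ (Nat.lt_floor_add_one _).le
        · have : φ (x j) = 0 := not_not.1 fun h => hjE ⟨h, hp.tag_mem hj.1⟩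
          simp [this]
    _ = (k + 1) * ∑ j ∈ F with x j ∈ E, (t (j + 1) - t j) := by rw [mul_sum, ← sum_filter]
    _ ≤ (k + 1) * η k := mul_le_mul_of_nonneg_left hlen (by positivity)
    _ = ε / 4 * (1 / 2) ^ k := by simp only [η]; field_simp

theorem HKIntegral.congr_ae {a b : ℝ} {f g : ℝ → ℝ} {α : ℝ} (h : HKIntegral a b f α)
    (hfg : f =ᵐ[volume.restrict (Set.Icc a b)] g) : HKIntegral a b g α := by
  have hzero : HKIntegral a b (g - f) 0 :=
    hkIntegral_zero_of_ae_eq_zero (hfg.mono fun y hy => by simp [hy])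
  simpa using h.add hzero

section

variable {a b : ℝ} {f : ℕ → ℝ → ℝ} {α : ℕ → ℝ}

theorem abs_riemannSum_diag_sub_sum_le {ε : ℝ} {δ : ℕ → ℝ → ℝ}
    (hδpos : ∀ m, ∀ y ∈ Set.Icc a b, 0 < δ m y)
    (hδ : ∀ (m n : ℕ) (t x : ℕ → ℝ), IsTaggedPartition a b n t x → IsFine (δ m) n t x →
      |RiemannSum (f m) n t x - α m| < ε * (1 / 2) ^ m)
    (N : ℝ → ℕ) {n : ℕ} {t x : ℕ → ℝ} (hp : IsTaggedPartition a b n t x)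
    (hf : IsFine (fun y => δ (N y) y) n t x) {I : ℕ → ℕ → ℝ}
    (hI : ∀ m, ∀ j < n, HKIntegral (t j) (t (j + 1)) (f m) (I m j))
    (hsum : ∀ m, ∑ j ∈ range n, I m j = α m) :
    |RiemannSum (fun y => f (N y) y) n t x - ∑ j ∈ range n, I (N (x j)) j| ≤ 2 * ε := by
  rw [RiemannSum, ← sum_sub_distrib]
  refine abs_sum_le_of_abs_sum_fiber_le (range n) (fun j => N (x j)) _ fun m => ?_
  rw [sum_congr rfl fun j hj => by rw [(mem_filter.1 hj).2]]
  refine abs_sum_sub_integral_le (hδpos m) (hδ m) hp (hI m) (hsum m) (filter_subset _ _)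
    fun j hj => ?_
  obtain ⟨hjn, rfl⟩ := mem_filter.1 hj
  exact hf j (mem_range.1 hjn)

theorem HKIntegral.monotone_of_monotone (hab : a ≤ b) (hint : ∀ n, HKIntegral a b (f n) (α n))
    (hmono : ∀ y, Monotone fun n => f n y) : Monotone α :=
  fun _ _ hmn => (hint _).mono hab (hint _) fun y _ => hmono y hmn

theorem HKIntegral.of_monotone_of_tendsto (hab : a ≤ b) {g : ℝ → ℝ} {A : ℝ}
    (hint : ∀ n, HKIntegral a b (f n) (α n)) (hmono : ∀ y, Monotone fun n => f n y)
    (hlim : ∀ y, Tendsto (fun n => f n y) atTop (𝓝 (g y))) (hα : Tendsto α atTop (𝓝 A)) :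
    HKIntegral a b g A := by
  have hαA := (HKIntegral.monotone_of_monotone hab hint hmono).ge_of_tendsto hα
  intro ε hε
  obtain ⟨n₀, hn₀⟩ := (hα.eventually (lt_mem_nhds (by linarith : A - ε / 4 < A))).exists
  choose δ hδpos hδ using fun m => hint m (ε / 8 * (1 / 2) ^ m) (by positivity)
  have hba : 0 < b - a + 1 := by linarith
  have hc : 0 < ε / (4 * (b - a + 1)) := by positivity
  choose N hN hNge using fun y =>
    (((hlim y).eventually (Metric.ball_mem_nhds _ hc)).and (eventually_ge_atTop n₀)).exists
  refine ⟨fun y => δ (N y) y, fun y hy => hδpos _ y hy, fun n t x hp hf => ?_⟩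
  choose I hI hsum using fun m => (hint m).exists_sum_eq hp
  have hgN : |RiemannSum (fun y => g y - f (N y) y) n t x| ≤ ε / 4 := by
    calc _ ≤ ε / (4 * (b - a + 1)) * (b - a) :=
          hp.abs_riemannSum_le fun y _ => (abs_sub_comm _ _).trans_le (hN y).le
      _ ≤ ε / (4 * (b - a + 1)) * (b - a + 1) := by gcongr; linarith
      _ = ε / 4 := by field_simp
  have hsaks := (abs_riemannSum_diag_sub_sum_le hδpos hδ N hp hf hI hsum).trans_eq
    (by ring : 2 * (ε / 8) = ε / 4)
  have hImono : ∀ j < n, Monotone fun m => I m j := fun j hj _ _ hmm' =>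
    (hI _ j hj).mono (hp.2.2.1 j hj).le (hI _ j hj) fun y _ => hmono y hmm'
  obtain ⟨M, hM⟩ : ∃ M, ∀ j < n, N (x j) ≤ M :=
    ⟨(range n).sup fun j => N (x j), fun j hj => le_sup (f := fun j => N (x j)) (mem_range.2 hj)⟩
  have hlower : α n₀ ≤ ∑ j ∈ range n, I (N (x j)) j := hsum n₀ ▸ sum_le_sum fun j hj =>
    hImono j (mem_range.1 hj) (hNge _)
  have hupper : ∑ j ∈ range n, I (N (x j)) j ≤ α M := hsum M ▸ sum_le_sum fun j hj =>
    hImono j (mem_range.1 hj) (hM j (mem_range.1 hj))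
  have hsplit : RiemannSum g n t x = RiemannSum (fun y => g y - f (N y) y) n t x +
      RiemannSum (fun y => f (N y) y) n t x := by
    rw [← riemannSum_add]; congr 1; ext y; simp
  rw [abs_le] at hgN hsaks
  rw [abs_lt]
  constructor <;> linarith [hαA M]

end

/-- Monotone convergence theorem for the HK integral on `[a,b]`. -/
theorem hk_monotone_convergence (a b : ℝ) (hab : a ≤ b)
    (f : ℕ → ℝ → ℝ) (g : ℝ → ℝ) (α : ℕ → ℝ)
    (hint : ∀ n, HKIntegral a b (f n) (α n))
    (hmono : ∀ n, ∀ᵐ x ∂(MeasureTheory.volume.restrict (Set.Icc a b)),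
      f n x ≤ f (n + 1) x)
    (hlim : ∀ᵐ x ∂(MeasureTheory.volume.restrict (Set.Icc a b)),
      Filter.Tendsto (fun n => f n x) Filter.atTop (nhds (g x)))
    (hbd : ∃ M : ℝ, ∀ n, α n ≤ M) :
    ∃ β : ℝ, Filter.Tendsto α Filter.atTop (nhds β) ∧ HKIntegral a b g β := by
  set G : Set ℝ := {y | Monotone (fun n => f n y) ∧ Tendsto (fun n => f n y) atTop (𝓝 (g y))}
  have hG : ∀ᵐ y ∂(volume.restrict (Set.Icc a b)), y ∈ G := by
    filter_upwards [ae_all_iff.2 hmono, hlim] with y hy hy'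
    exact ⟨monotone_nat_of_le_succ hy, hy'⟩
  have hF : ∀ n, HKIntegral a b (G.indicator (f n)) (α n) := fun n =>
    (hint n).congr_ae (hG.mono fun y hy => (Set.indicator_of_mem hy _).symm)
  have hFmono : ∀ y, Monotone fun n => G.indicator (f n) y := fun y => by
    by_cases hy : y ∈ G
    · simpa [hy] using hy.1
    · simp [hy, monotone_const]
  have hFlim : ∀ y, Tendsto (fun n => G.indicator (f n) y) atTop (𝓝 (G.indicator g y)) :=
    fun y => by
      by_cases hy : y ∈ G
      · simpa [hy] using hy.2
      · simp [hy]
  obtain ⟨M, hM⟩ := hbd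
  have hα := tendsto_atTop_ciSup (HKIntegral.monotone_of_monotone hab hF hFmono)
    ⟨M, Set.forall_mem_range.2 hM⟩
  refine ⟨_, hα, (HKIntegral.of_monotone_of_tendsto hab hF hFmono hFlim hα).congr_ae ?_⟩
  exact hG.mono fun y hy => Set.indicator_of_mem hy g
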